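/- If a₁ = 1, then |Λ_n(1, a₂, ..., a_m)| = |Π_n(a₂−2, ..., a_m−2)|, via the bijection sending (π₁,...,πₙ) to (λ₁,...,λₙ) with λᵢ = U πᵢ D. -/

import Mathlib

/-- The steps of a Schröder path: up `(1,1)`, down `(1,-1)`, flat `(2,0)`. -/
inductive SStep
  | U | D | F
deriving DecidableEq

/-- The displacement vector of a step. -/
def SStep.vec : SStep → ℤ × ℤ
  | .U => (1, 1)
  | .D => (1, -1)
  | .F => (2, 0)

/-- The lattice points visited by a path starting at `p` with step list `s`
(the start point and the endpoint of each step). -/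
def pathPoints (p : ℤ × ℤ) (s : List SStep) : List (ℤ × ℤ) :=
  s.scanl (fun q st => q + st.vec) p

/-- The endpoint of a path starting at `p` with step list `s`. -/
def pathEnd (p : ℤ × ℤ) (s : List SStep) : ℤ × ℤ :=
  s.foldl (fun q st => q + st.vec) p

/-- Each step of the path paired with the point where it starts. -/
def stepsWithPos (p : ℤ × ℤ) (s : List SStep) : List ((ℤ × ℤ) × SStep) :=
  (pathPoints p s).zip s

/-- `s` is a Schröder path from `p` to `q`: both endpoints on the x-axis, the path
ends at `q`, and the path never goes below the x-axis. -/
def IsSchroder (p q : ℤ × ℤ) (s : List SStep) : Prop :=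
  p.2 = 0 ∧ q.2 = 0 ∧ pathEnd p s = q ∧ ∀ r ∈ pathPoints p s, 0 ≤ r.2

/-- The path starting at `p` with steps `s` has a flat step on the x-axis. -/
def HasFlatOnAxis (p : ℤ × ℤ) (s : List SStep) : Prop :=
  ∃ q : ℤ × ℤ, (q, SStep.F) ∈ stepsWithPos p s ∧ q.2 = 0
/-- A path (starting at `p`, with steps `s`) is compatible with the barrier setup
`Bar(A)` — barriers from `(-a+t, t+1/2)` to `(-a+t+1, t+1/2)` for each `a ∈ A` and
all `t ∈ ℤ`, i.e. along the lines `y = x + a` — iff no up or down step crosses a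
barrier. -/
def BarCompatible (A : Finset ℕ) (p : ℤ × ℤ) (s : List SStep) : Prop :=
  ∀ pr ∈ stepsWithPos p s,
    (pr.2 = SStep.U → ∀ a ∈ A, pr.1.2 - pr.1.1 ≠ (a : ℤ)) ∧
    (pr.2 = SStep.D → ∀ a ∈ A, pr.1.2 - pr.1.1 - 1 ≠ (a : ℤ))

/-- A path has no bad flat steps w.r.t. `Bar(A)`: every flat step on the x-axis
starts at `(-a-1, 0)` for some `a ∈ A`. -/
def NoBadFlat (A : Finset ℕ) (p : ℤ × ℤ) (s : List SStep) : Prop :=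
  ∀ pr ∈ stepsWithPos p s,
    pr.2 = SStep.F → pr.1.2 = 0 → ∃ a ∈ A, pr.1.1 = -(a : ℤ) - 1

/-- The starting point `A_{i+1}` (0-indexed `i`): `(xᵢ, 0)` where `xᵢ` is the
`(i+1)`-st largest negative odd integer not in `{-a : a ∈ A}`. -/
noncomputable def startPt (A : Finset ℕ) (i : ℕ) : ℤ × ℤ :=
  (-(Nat.nth (fun m => Odd m ∧ m ∉ A) i : ℤ), 0)

/-- The ending point `B_{i+1} = (2(i+1)-1, 0)` (0-indexed `i`). -/
def endPt (i : ℕ) : ℤ × ℤ := (2 * (i : ℤ) + 1, 0)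

/-- `Π_n(A)`: `n`-tuples of pairwise non-intersecting Schröder paths compatible
with `Bar(A)`, the `i`-th running from `Aᵢ` to `Bᵢ`. -/
def PiTuples (A : Finset ℕ) (n : ℕ) : Type :=
  {π : Fin n → List SStep //
    (∀ i : Fin n, IsSchroder (startPt A i) (endPt i) (π i) ∧
      BarCompatible A (startPt A i) (π i)) ∧
    ∀ i j : Fin n, i ≠ j →
      ∀ x ∈ pathPoints (startPt A i) (π i), x ∉ pathPoints (startPt A j) (π j)}

/-- `Λ_n(A)`: as `Π_n(A)`, but additionally each path has no bad flat steps. -/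
def LambdaTuples (A : Finset ℕ) (n : ℕ) : Type :=
  {π : Fin n → List SStep //
    (∀ i : Fin n, IsSchroder (startPt A i) (endPt i) (π i) ∧
      BarCompatible A (startPt A i) (π i) ∧ NoBadFlat A (startPt A i) (π i)) ∧
    ∀ i j : Fin n, i ≠ j →
      ∀ x ∈ pathPoints (startPt A i) (π i), x ∉ pathPoints (startPt A j) (π j)}


section Infra

variable {p q r c : ℤ × ℤ} {s t : List SStep} {st : SStep} {pr : (ℤ × ℤ) × SStep}

lemma pathPoints_nil : pathPoints p [] = [p] := rfl

lemma pathPoints_cons : pathPoints p (st :: s) = p :: pathPoints (p + st.vec) s := by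
  simp only [pathPoints, List.scanl_cons]

lemma pathEnd_nil : pathEnd p [] = p := rfl

lemma pathEnd_cons : pathEnd p (st :: s) = pathEnd (p + st.vec) s := rfl

lemma stepsWithPos_nil : stepsWithPos p [] = [] := by
  simp [stepsWithPos, pathPoints_nil]

lemma stepsWithPos_cons :
    stepsWithPos p (st :: s) = (p, st) :: stepsWithPos (p + st.vec) s := by
  simp only [stepsWithPos, pathPoints, List.scanl_cons, List.zip_cons_cons]

lemma mem_pathPoints_self (p : ℤ × ℤ) (s : List SStep) : p ∈ pathPoints p s := by
  cases s <;> simp [pathPoints_nil, pathPoints_cons]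

lemma pathEnd_mem_pathPoints : ∀ (s : List SStep) (p : ℤ × ℤ),
    pathEnd p s ∈ pathPoints p s := by
  intro s
  induction s with
  | nil => intro p; simp [pathEnd_nil, pathPoints_nil]
  | cons st s ih =>
    intro p
    rw [pathEnd_cons, pathPoints_cons]
    exact List.mem_cons_of_mem _ (ih _)

lemma pathEnd_append : pathEnd p (s ++ t) = pathEnd (pathEnd p s) t :=
  List.foldl_append ..

lemma mem_pathPoints_append_left : ∀ (s : List SStep) (p : ℤ × ℤ),
    r ∈ pathPoints p s → r ∈ pathPoints p (s ++ t) := by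
  intro s
  induction s with
  | nil =>
    intro p h
    rw [pathPoints_nil, List.mem_singleton] at h
    subst h; exact mem_pathPoints_self _ _
  | cons st s ih =>
    intro p h
    rw [pathPoints_cons] at h
    rcases List.mem_cons.1 h with h | h
    · subst h; exact mem_pathPoints_self _ _
    · rw [List.cons_append, pathPoints_cons]
      exact List.mem_cons_of_mem _ (ih _ h)

lemma mem_pathPoints_append_right : ∀ (s : List SStep) (p : ℤ × ℤ),
    r ∈ pathPoints (pathEnd p s) t → r ∈ pathPoints p (s ++ t) := by
  intro s
  induction s with
  | nil => intro p h; exact h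
  | cons st s ih =>
    intro p h
    rw [pathEnd_cons] at h
    rw [List.cons_append, pathPoints_cons]
    exact List.mem_cons_of_mem _ (ih _ h)

lemma mem_stepsWithPos_append_right : ∀ (s : List SStep) (p : ℤ × ℤ),
    pr ∈ stepsWithPos (pathEnd p s) t → pr ∈ stepsWithPos p (s ++ t) := by
  intro s
  induction s with
  | nil => intro p h; exact h
  | cons st s ih =>
    intro p h
    rw [pathEnd_cons] at h
    rw [List.cons_append, stepsWithPos_cons]
    exact List.mem_cons_of_mem _ (ih _ h)

lemma pathPoints_concat : ∀ (s : List SStep) (p : ℤ × ℤ),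
    pathPoints p (s ++ [st]) = pathPoints p s ++ [pathEnd p s + st.vec] := by
  intro s
  induction s with
  | nil => intro p; simp [pathPoints_nil, pathPoints_cons, pathEnd_nil]
  | cons st' s ih =>
    intro p
    rw [List.cons_append, pathPoints_cons, ih, pathPoints_cons, pathEnd_cons]
    simp

lemma stepsWithPos_concat : ∀ (s : List SStep) (p : ℤ × ℤ),
    stepsWithPos p (s ++ [st]) = stepsWithPos p s ++ [(pathEnd p s, st)] := by
  intro s
  induction s with
  | nil => intro p; simp [stepsWithPos_nil, stepsWithPos_cons, pathEnd_nil]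
  | cons st' s ih =>
    intro p
    rw [List.cons_append, stepsWithPos_cons, ih, stepsWithPos_cons, pathEnd_cons]
    simp

lemma pathEnd_translate : ∀ (s : List SStep) (p c : ℤ × ℤ),
    pathEnd (p + c) s = pathEnd p s + c := by
  intro s
  induction s with
  | nil => intro p c; rfl
  | cons st s ih =>
    intro p c
    rw [pathEnd_cons, pathEnd_cons, add_right_comm, ih]

lemma pathPoints_translate : ∀ (s : List SStep) (p c : ℤ × ℤ),
    pathPoints (p + c) s = (pathPoints p s).map (· + c) := by
  intro s
  induction s with
  | nil => intro p c; simp [pathPoints_nil]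
  | cons st s ih =>
    intro p c
    rw [pathPoints_cons, pathPoints_cons, add_right_comm, ih]
    simp

lemma stepsWithPos_translate : ∀ (s : List SStep) (p c : ℤ × ℤ),
    stepsWithPos (p + c) s = (stepsWithPos p s).map (fun pr => (pr.1 + c, pr.2)) := by
  intro s
  induction s with
  | nil => intro p c; simp [stepsWithPos_nil]
  | cons st s ih =>
    intro p c
    rw [stepsWithPos_cons, stepsWithPos_cons, add_right_comm, ih]
    simp

lemma exists_split : ∀ (s : List SStep) (p : ℤ × ℤ), r ∈ pathPoints p s →
    ∃ s₁ s₂, s = s₁ ++ s₂ ∧ pathEnd p s₁ = r := by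
  intro s
  induction s with
  | nil =>
    intro p h
    rw [pathPoints_nil, List.mem_singleton] at h
    exact ⟨[], [], rfl, h.symm⟩
  | cons st s ih =>
    intro p h
    rw [pathPoints_cons] at h
    rcases List.mem_cons.1 h with h | h
    · exact ⟨[], st :: s, rfl, h.symm⟩
    · obtain ⟨s₁, s₂, h1, h2⟩ := ih _ h
      exact ⟨st :: s₁, s₂, by rw [h1]; rfl, h2⟩

lemma vec_fst_pos (st : SStep) : 1 ≤ st.vec.1 := by
  cases st <;> simp [SStep.vec]

lemma vec_sum_nonneg (st : SStep) : 0 ≤ st.vec.1 + st.vec.2 := by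
  cases st <;> simp [SStep.vec]

lemma vec_sum_even (st : SStep) : ∃ c : ℕ, st.vec.1 + st.vec.2 = 2 * c := by
  cases st
  · exact ⟨1, rfl⟩
  · exact ⟨0, rfl⟩
  · exact ⟨1, rfl⟩

lemma vec_diff_even (st : SStep) : ∃ c : ℕ, st.vec.2 - st.vec.1 = -(2 * c) := by
  cases st
  · exact ⟨0, rfl⟩
  · exact ⟨1, rfl⟩
  · exact ⟨1, rfl⟩

lemma mem_pathPoints_x : ∀ (s : List SStep) (p : ℤ × ℤ), r ∈ pathPoints p s →
    r = p ∨ p.1 < r.1 := by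
  intro s
  induction s with
  | nil =>
    intro p h
    rw [pathPoints_nil, List.mem_singleton] at h
    exact Or.inl h
  | cons st s ih =>
    intro p h
    rw [pathPoints_cons] at h
    rcases List.mem_cons.1 h with h | h
    · exact Or.inl h
    · rcases ih _ h with h | h
      · subst h
        right
        have := vec_fst_pos st
        simp only [Prod.fst_add]
        omega
      · right
        have := vec_fst_pos st
        simp only [Prod.fst_add] at h
        omega

lemma start_x_le_pathEnd : ∀ (s : List SStep) (p : ℤ × ℤ), p.1 ≤ (pathEnd p s).1 := by
  intro s
  induction s with
  | nil => intro p; exact le_refl _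
  | cons st s ih =>
    intro p
    rw [pathEnd_cons]
    have h1 := ih (p + st.vec)
    have := vec_fst_pos st
    simp only [Prod.fst_add] at h1
    omega

lemma mem_x_le_pathEnd (h : r ∈ pathPoints p s) : r.1 ≤ (pathEnd p s).1 := by
  obtain ⟨s₁, s₂, h1, h2⟩ := exists_split s p h
  subst h1
  rw [pathEnd_append, h2]
  exact start_x_le_pathEnd _ _

lemma start_sum_le_pathEnd : ∀ (s : List SStep) (p : ℤ × ℤ),
    p.1 + p.2 ≤ (pathEnd p s).1 + (pathEnd p s).2 := by
  intro s
  induction s with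
  | nil => intro p; exact le_refl _
  | cons st s ih =>
    intro s
    rw [pathEnd_cons]
    have h1 := ih (s + st.vec)
    have := vec_sum_nonneg st
    simp only [Prod.fst_add, Prod.snd_add] at h1
    omega

lemma mem_sum_le_pathEnd (h : r ∈ pathPoints p s) :
    r.1 + r.2 ≤ (pathEnd p s).1 + (pathEnd p s).2 := by
  obtain ⟨s₁, s₂, h1, h2⟩ := exists_split s p h
  subst h1
  rw [pathEnd_append, h2]
  exact start_sum_le_pathEnd _ _

lemma mem_pathPoints_sum : ∀ (s : List SStep) (p : ℤ × ℤ), r ∈ pathPoints p s →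
    ∃ c : ℕ, r.1 + r.2 = p.1 + p.2 + 2 * c := by
  intro s
  induction s with
  | nil =>
    intro p h
    rw [pathPoints_nil, List.mem_singleton] at h
    exact ⟨0, by simp [h]⟩
  | cons st s ih =>
    intro p h
    rw [pathPoints_cons] at h
    rcases List.mem_cons.1 h with h | h
    · exact ⟨0, by simp [h]⟩
    · obtain ⟨c, hc⟩ := ih _ h
      obtain ⟨d, hd⟩ := vec_sum_even st
      refine ⟨c + d, ?_⟩
      simp only [Prod.fst_add, Prod.snd_add] at hc
      push_cast
      push_cast at hc
      omega

lemma mem_pathPoints_diff : ∀ (s : List SStep) (p : ℤ × ℤ), r ∈ pathPoints p s →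
    ∃ c : ℕ, r.2 - r.1 = p.2 - p.1 - 2 * c := by
  intro s
  induction s with
  | nil =>
    intro p h
    rw [pathPoints_nil, List.mem_singleton] at h
    exact ⟨0, by simp [h]⟩
  | cons st s ih =>
    intro p h
    rw [pathPoints_cons] at h
    rcases List.mem_cons.1 h with h | h
    · exact ⟨0, by simp [h]⟩
    · obtain ⟨c, hc⟩ := ih _ h
      obtain ⟨d, hd⟩ := vec_diff_even st
      refine ⟨c + d, ?_⟩
      simp only [Prod.fst_add, Prod.snd_add] at hc
      push_cast
      push_cast at hc
      omega

lemma steps_mem : ∀ (s : List SStep) (p : ℤ × ℤ), pr ∈ stepsWithPos p s →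
    pr.1 ∈ pathPoints p s ∧ pr.1 + pr.2.vec ∈ pathPoints p s := by
  intro s
  induction s with
  | nil => intro p h; rw [stepsWithPos_nil] at h; simp at h
  | cons st s ih =>
    intro p h
    rw [stepsWithPos_cons] at h
    rw [pathPoints_cons]
    rcases List.mem_cons.1 h with h | h
    · subst h
      exact ⟨List.mem_cons_self, List.mem_cons_of_mem _ (mem_pathPoints_self _ _)⟩
    · obtain ⟨h1, h2⟩ := ih _ h
      exact ⟨List.mem_cons_of_mem _ h1, List.mem_cons_of_mem _ h2⟩

lemma crossing : ∀ (s : List SStep) (p : ℤ × ℤ), Odd (p.2 - p.1) → -1 ≤ p.2 - p.1 →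
    (pathEnd p s).2 - (pathEnd p s).1 ≤ -1 →
    ∃ r ∈ pathPoints p s, r.2 - r.1 = -1 := by
  intro s
  induction s with
  | nil =>
    intro p hodd h1 h2
    rw [pathEnd_nil] at h2
    exact ⟨p, mem_pathPoints_self _ _, le_antisymm h2 h1⟩
  | cons st s ih =>
    intro p hodd h1 h2
    by_cases hp : p.2 - p.1 = -1
    · exact ⟨p, mem_pathPoints_self _ _, hp⟩
    · have hge : 1 ≤ p.2 - p.1 := by
        rcases hodd with ⟨k, hk⟩
        omega
      obtain ⟨d, hd⟩ := vec_diff_even st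
      have hdle : (st.vec.2 : ℤ) - st.vec.1 ≥ -2 := by
        cases st <;> simp [SStep.vec]
      have hodd' : Odd ((p + st.vec).2 - (p + st.vec).1) := by
        rcases hodd with ⟨k, hk⟩
        refine ⟨k - d, ?_⟩
        simp only [Prod.fst_add, Prod.snd_add]
        omega
      have h1' : -1 ≤ (p + st.vec).2 - (p + st.vec).1 := by
        simp only [Prod.fst_add, Prod.snd_add]
        omega
      rw [pathEnd_cons] at h2
      obtain ⟨r, hr1, hr2⟩ := ih _ hodd' h1' h2
      rw [pathPoints_cons]
      exact ⟨r, List.mem_cons_of_mem _ hr1, hr2⟩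

end Infra


section LambdaSide

variable {A : Finset ℕ} {N : ℤ}

/-- Key auxiliary: a path that sits on the axis at `(-b, 0)` for some `b ∈ A`
and satisfies all the `Λ`-constraints cannot reach `(N, 0)`. -/
lemma lam_aux (h0 : (0 : ℕ) ∉ A) (hN : 1 ≤ N) :
    ∀ (s : List SStep) (q : ℤ × ℤ), q.2 = 0 → (∃ b ∈ A, q.1 = -(b : ℤ)) →
    pathEnd q s = (N, 0) →
    (∀ r ∈ pathPoints q s, 0 ≤ r.2) →
    (∀ pr ∈ stepsWithPos q s, pr.2 = SStep.U → ∀ b ∈ A, pr.1.2 - pr.1.1 ≠ (b : ℤ)) →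
    (∀ pr ∈ stepsWithPos q s, pr.2 = SStep.F → pr.1.2 = 0 →
      ∃ b ∈ A, pr.1.1 = -(b : ℤ) - 1) →
    (∀ r ∈ pathPoints q s, r.2 = 0 → r.1 < N → ∃ b ∈ A, r.1 = -(b : ℤ)) →
    False := by
  intro s
  induction s with
  | nil =>
    intro q hq0 ⟨b, hbA, hb⟩ hend _ _ _ _
    rw [pathEnd_nil] at hend
    have : q.1 = N := by rw [hend]
    have : (0 : ℤ) ≤ b := Int.natCast_nonneg b
    omega
  | cons st s ih =>
    intro q hq0 ⟨b, hbA, hb⟩ hend hnn hbar hflat haxis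
    cases st with
    | U =>
      have hmem : ((q, SStep.U) : (ℤ × ℤ) × SStep) ∈ stepsWithPos q (SStep.U :: s) := by
        rw [stepsWithPos_cons]; exact List.mem_cons_self
      exact hbar _ hmem rfl b hbA (by simp [hq0, hb])
    | D =>
      have hmem : q + SStep.D.vec ∈ pathPoints q (SStep.D :: s) := by
        rw [pathPoints_cons]
        exact List.mem_cons_of_mem _ (mem_pathPoints_self _ _)
      have := hnn _ hmem
      simp only [SStep.vec, Prod.snd_add] at this
      omega
    | F =>
      have hmemF : ((q, SStep.F) : (ℤ × ℤ) × SStep) ∈ stepsWithPos q (SStep.F :: s) := by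
        rw [stepsWithPos_cons]; exact List.mem_cons_self
      obtain ⟨c, hcA, hc⟩ := hflat _ hmemF rfl hq0
      have hc'' : q.1 = -(c : ℤ) - 1 := hc
      set q' : ℤ × ℤ := q + SStep.F.vec with hq'def
      have hq'1 : q'.1 = q.1 + 2 := by simp [hq'def, SStep.vec]
      have hq'2 : q'.2 = 0 := by simp [hq'def, SStep.vec, hq0]
      have hq'mem : q' ∈ pathPoints q (SStep.F :: s) := by
        rw [pathPoints_cons]
        exact List.mem_cons_of_mem _ (mem_pathPoints_self _ _)
      have hendq' : pathEnd q' s = (N, 0) := by rw [← pathEnd_cons]; exact hend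
      have hle : q'.1 ≤ N := by
        have := mem_x_le_pathEnd (mem_pathPoints_self q' s)
        rw [hendq'] at this
        exact this
      rcases lt_or_eq_of_le hle with hlt | heq
      · obtain ⟨b', hb'A, hb'⟩ := haxis _ hq'mem hq'2 (by omega)
        refine ih q' hq'2 ⟨b', hb'A, hb'⟩ hendq' ?_ ?_ ?_ ?_
        · intro r hr
          exact hnn r (by rw [pathPoints_cons]; exact List.mem_cons_of_mem _ hr)
        · intro pr hpr
          exact hbar pr (by rw [stepsWithPos_cons]; exact List.mem_cons_of_mem _ hpr)
        · intro pr hpr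
          exact hflat pr (by rw [stepsWithPos_cons]; exact List.mem_cons_of_mem _ hpr)
        · intro r hr
          exact haxis r (by rw [pathPoints_cons]; exact List.mem_cons_of_mem _ hr)
      · -- q'.1 = N:  then q.1 = N - 2, also q.1 = -c - 1 with c ∈ A, c ≥ 1, and q.1 = -b ≤ -1
        have hb1 : (1 : ℤ) ≤ b := by
          have : b ≠ 0 := fun h => h0 (h ▸ hbA)
          omega
        have hc1 : (1 : ℤ) ≤ c := by
          have : c ≠ 0 := fun h => h0 (h ▸ hcA)
          omega
        omega

/-- In presence of all `Λ`-constraints, the path has no axis point other than the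
start and the final endpoint. -/
lemma lam_no_interior (h0 : (0 : ℕ) ∉ A) (hN : 1 ≤ N) {p : ℤ × ℤ} {s : List SStep}
    (hend : pathEnd p s = (N, 0))
    (hnn : ∀ r ∈ pathPoints p s, 0 ≤ r.2)
    (hbar : ∀ pr ∈ stepsWithPos p s, pr.2 = SStep.U → ∀ b ∈ A, pr.1.2 - pr.1.1 ≠ (b : ℤ))
    (hflat : ∀ pr ∈ stepsWithPos p s, pr.2 = SStep.F → pr.1.2 = 0 →
      ∃ b ∈ A, pr.1.1 = -(b : ℤ) - 1)
    (haxis : ∀ r ∈ pathPoints p s, r.2 = 0 → r ≠ p → r.1 < N → ∃ b ∈ A, r.1 = -(b : ℤ)) :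
    ∀ r ∈ pathPoints p s, r.2 = 0 → r ≠ p → ¬ r.1 < N := by
  intro r hr hr0 hrp hrN
  obtain ⟨b, hbA, hb⟩ := haxis r hr hr0 hrp hrN
  obtain ⟨s₁, s₂, hs, hsplit⟩ := exists_split s p hr
  subst hs
  have hrgt : p.1 < r.1 := by
    rcases mem_pathPoints_x _ _ hr with h | h
    · exact absurd h hrp
    · exact h
  refine lam_aux h0 hN s₂ r hr0 ⟨b, hbA, hb⟩ ?_ ?_ ?_ ?_ ?_
  · rw [← hsplit, ← pathEnd_append]; exact hend
  · intro r' hr'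
    exact hnn r' (mem_pathPoints_append_right _ _ (by rw [hsplit]; exact hr'))
  · intro pr hpr
    exact hbar pr (mem_stepsWithPos_append_right _ _ (by rw [hsplit]; exact hpr))
  · intro pr hpr
    exact hflat pr (mem_stepsWithPos_append_right _ _ (by rw [hsplit]; exact hpr))
  · intro r' hr' h0' hN'
    have hr'mem : r' ∈ pathPoints p (s₁ ++ s₂) :=
      mem_pathPoints_append_right _ _ (by rw [hsplit]; exact hr')
    refine haxis r' hr'mem h0' ?_ hN'
    intro hcon
    have : r.1 ≤ r'.1 := by
      rcases mem_pathPoints_x _ _ hr' with h | h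
      · rw [h]
      · omega
    rw [hcon] at this
    omega

end LambdaSide


section Decomp

variable {A : Finset ℕ} {N : ℤ}

/-- Any `Λ`-path decomposes as `U ; mid ; D` with `mid` staying at height `≥ 1`. -/
lemma lam_decomp (h0 : (0 : ℕ) ∉ A) (hN : 1 ≤ N) {p : ℤ × ℤ} {s : List SStep}
    (hp1 : p.1 ≤ -1) (hp2 : p.2 = 0)
    (hend : pathEnd p s = (N, 0))
    (hnn : ∀ r ∈ pathPoints p s, 0 ≤ r.2)
    (hbar : ∀ pr ∈ stepsWithPos p s, pr.2 = SStep.U → ∀ b ∈ A, pr.1.2 - pr.1.1 ≠ (b : ℤ))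
    (hflat : ∀ pr ∈ stepsWithPos p s, pr.2 = SStep.F → pr.1.2 = 0 →
      ∃ b ∈ A, pr.1.1 = -(b : ℤ) - 1)
    (haxis : ∀ r ∈ pathPoints p s, r.2 = 0 → r ≠ p → r.1 < N → ∃ b ∈ A, r.1 = -(b : ℤ)) :
    ∃ mid, s = SStep.U :: mid ++ [SStep.D] ∧
      (∀ r ∈ pathPoints (p + (1, 1)) mid, 1 ≤ r.2) ∧
      pathEnd (p + (1, 1)) mid = (N - 1, 1) := by
  have hinterior := lam_no_interior h0 hN hend hnn hbar hflat haxis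
  -- the list is nonempty
  cases s with
  | nil =>
    rw [pathEnd_nil] at hend
    rw [hend] at hp1
    simp at hp1
    omega
  | cons st₀ s₀ =>
  -- first step is U
  have hfirstU : st₀ = SStep.U := by
    cases st₀ with
    | U => rfl
    | D =>
      exfalso
      have hmem : p + SStep.D.vec ∈ pathPoints p (SStep.D :: s₀) := by
        rw [pathPoints_cons]
        exact List.mem_cons_of_mem _ (mem_pathPoints_self _ _)
      have := hnn _ hmem
      simp only [SStep.vec, Prod.snd_add] at this
      omega
    | F =>
      exfalso
      have hmemF : ((p, SStep.F) : (ℤ × ℤ) × SStep) ∈ stepsWithPos p (SStep.F :: s₀) := by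
        rw [stepsWithPos_cons]; exact List.mem_cons_self
      obtain ⟨c, hcA, hc⟩ := hflat _ hmemF rfl hp2
      have hc' : p.1 = -(c : ℤ) - 1 := hc
      have hc1 : (1 : ℤ) ≤ c := by
        have : c ≠ 0 := fun h => h0 (h ▸ hcA)
        omega
      set q' : ℤ × ℤ := p + SStep.F.vec with hq'def
      have hq'1 : q'.1 = p.1 + 2 := by simp [hq'def, SStep.vec]
      have hq'2 : q'.2 = 0 := by simp [hq'def, SStep.vec, hp2]
      have hq'mem : q' ∈ pathPoints p (SStep.F :: s₀) := by
        rw [pathPoints_cons]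
        exact List.mem_cons_of_mem _ (mem_pathPoints_self _ _)
      have hq'netp : q' ≠ p := by
        intro h
        have : q'.1 = p.1 := by rw [h]
        omega
      have hq'lt : q'.1 < N := by
        omega
      exact hinterior q' hq'mem hq'2 hq'netp hq'lt
  subst hfirstU
  -- last step exists and is D
  have hs0ne : s₀ ≠ [] := by
    intro h
    subst h
    have : pathEnd p [SStep.U] = p + SStep.U.vec := rfl
    rw [this] at hend
    have : (p + SStep.U.vec).2 = p.2 + 1 := by simp [SStep.vec]
    rw [hend] at this
    simp [hp2] at this
  obtain ⟨mid, stL, hmid⟩ : ∃ l x, s₀ = l ++ [x] := by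
    rcases List.eq_nil_or_concat s₀ with h | ⟨l, x, h⟩
    · exact absurd h hs0ne
    · exact ⟨l, x, by simpa using h⟩
  subst hmid
  set p1 : ℤ × ℤ := p + (1, 1) with hp1def
  have hvecU : SStep.U.vec = ((1 : ℤ), (1 : ℤ)) := rfl
  have hendsplit : pathEnd p (SStep.U :: (mid ++ [stL])) = pathEnd p1 mid + stL.vec := by
    rw [pathEnd_cons, hvecU, ← hp1def, pathEnd_append]
    rfl
  rw [hendsplit] at hend
  have hr0mem : pathEnd p1 mid ∈ pathPoints p (SStep.U :: (mid ++ [stL])) := by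
    rw [pathPoints_cons, hvecU, ← hp1def]
    exact List.mem_cons_of_mem _
      (mem_pathPoints_append_left _ _ (pathEnd_mem_pathPoints _ _))
  have hlastD : stL = SStep.D := by
    cases stL with
    | D => rfl
    | U =>
      exfalso
      have h2 : (pathEnd p1 mid).2 = -1 := by
        have : (pathEnd p1 mid + SStep.U.vec).2 = (pathEnd p1 mid).2 + 1 := by
          simp [SStep.vec]
        rw [hend] at this
        simp at this
        omega
      have := hnn _ hr0mem
      omega
    | F =>
      exfalso
      have hstep : ((pathEnd p1 mid, SStep.F) : (ℤ × ℤ) × SStep) ∈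
          stepsWithPos p (SStep.U :: (mid ++ [SStep.F])) := by
        rw [stepsWithPos_cons, hvecU, ← hp1def, stepsWithPos_concat]
        exact List.mem_cons_of_mem _ (by simp)
      have h2 : (pathEnd p1 mid).2 = 0 := by
        have : (pathEnd p1 mid + SStep.F.vec).2 = (pathEnd p1 mid).2 := by
          simp [SStep.vec]
        rw [hend] at this
        simp at this
        omega
      obtain ⟨c, hcA, hc⟩ := hflat _ hstep rfl h2
      have hc' : (pathEnd p1 mid).1 = -(c : ℤ) - 1 := hc
      have hc1 : (1 : ℤ) ≤ c := by
        have : c ≠ 0 := fun h => h0 (h ▸ hcA)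
        omega
      have h1 : (pathEnd p1 mid + SStep.F.vec).1 = (pathEnd p1 mid).1 + 2 := by
        simp [SStep.vec]
      rw [hend] at h1
      simp at h1
      omega
  subst hlastD
  have hmidend : pathEnd p1 mid = (N - 1, 1) := by
    have h1 : (pathEnd p1 mid + SStep.D.vec).1 = (pathEnd p1 mid).1 + 1 := by
      simp [SStep.vec]
    have h2 : (pathEnd p1 mid + SStep.D.vec).2 = (pathEnd p1 mid).2 - 1 := by
      simp [SStep.vec]; ring
    rw [hend] at h1 h2
    simp at h1 h2
    exact Prod.ext (by omega) (by omega)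
  refine ⟨mid, rfl, ?_, hmidend⟩
  intro r hr
  have hrmem : r ∈ pathPoints p (SStep.U :: (mid ++ [SStep.D])) := by
    rw [pathPoints_cons, hvecU, ← hp1def]
    exact List.mem_cons_of_mem _ (mem_pathPoints_append_left _ _ hr)
  have hnn' := hnn r hrmem
  rcases lt_or_eq_of_le hnn' with h | h
  · omega
  · exfalso
    have hrnep : r ≠ p := by
      intro hcon
      have h1 : p1.1 ≤ r.1 := by
        rcases mem_pathPoints_x _ _ hr with h' | h'
        · rw [h']
        · omega
      have hp11 : p1.1 = p.1 + 1 := by simp [hp1def]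
      rw [hcon] at h1
      omega
    have hrle : r.1 < N := by
      have := mem_x_le_pathEnd hr
      rw [hmidend] at this
      omega
    exact hinterior r hrmem h.symm hrnep hrle

end Decomp


section NthShift

lemma mem_stepsWithPos_append_left : ∀ (s : List SStep) (p : ℤ × ℤ)
    {t : List SStep} {pr : (ℤ × ℤ) × SStep},
    pr ∈ stepsWithPos p s → pr ∈ stepsWithPos p (s ++ t) := by
  intro s
  induction s with
  | nil => intro p t pr h; rw [stepsWithPos_nil] at h; simp at h
  | cons st s ih =>
    intro p t pr h
    rw [stepsWithPos_cons] at h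
    rw [List.cons_append, stepsWithPos_cons]
    rcases List.mem_cons.1 h with h | h
    · exact h ▸ List.mem_cons_self
    · exact List.mem_cons_of_mem _ (ih _ h)

lemma odd_not_mem_infinite (B : Finset ℕ) : {k | Odd k ∧ k ∉ B}.Infinite :=
  Set.infinite_of_injective_forall_mem (f := fun t : ℕ => 2 * (t + B.sup id) + 1)
    (by intro x y hxy; simp only at hxy; omega)
    (by
      intro t
      refine ⟨⟨t + B.sup id, rfl⟩, fun hmem => ?_⟩
      have h := Finset.le_sup (f := id) hmem
      simp only [id] at h
      omega)

lemma nth_shift {P Q : ℕ → Prop} [DecidablePred P] [DecidablePred Q]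
    (hQinf : {k | Q k}.Infinite)
    (hP0 : ¬ P 0) (hP1 : ¬ P 1)
    (hPQ : ∀ k, P (k + 2) ↔ Q k) (i : ℕ) :
    Nat.nth P i = Nat.nth Q i + 2 := by
  have hcount : ∀ k, Nat.count P (k + 2) = Nat.count Q k := by
    intro k
    induction k with
    | zero =>
      show Nat.count P 2 = Nat.count Q 0
      rw [show (2 : ℕ) = 0 + 1 + 1 by rfl, Nat.count_succ, Nat.count_succ]
      simp [hP0, hP1]
    | succ k ih =>
      rw [show k + 1 + 2 = (k + 2) + 1 by ring, Nat.count_succ (p := P) (n := k + 2),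
        Nat.count_succ (p := Q) (n := k), ih]
      by_cases h : Q k
      · rw [if_pos h, if_pos ((hPQ k).2 h)]
      · rw [if_neg h, if_neg (fun hc => h ((hPQ k).1 hc))]
  have hQz : Q (Nat.nth Q i) := Nat.nth_mem_of_infinite hQinf i
  have hP : P (Nat.nth Q i + 2) := (hPQ _).2 hQz
  have h2 := Nat.nth_count hP
  rwa [hcount, Nat.count_nth_of_infinite hQinf] at h2

end NthShift

/-- If `a₁ = 1`, then `|Λ_n(1, a₂, ..., a_m)| = |Π_n(a₂-2, ..., a_m-2)|`, via the
bijection sending `(π₁,...,πₙ)` to `(λ₁,...,λₙ)` with `λᵢ = U πᵢ D`. -/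
theorem lambda_eq_pi_strip (n m : ℕ) (hn : 1 ≤ n) (hm : 1 ≤ m) (a : ℕ → ℕ)
    (ha1 : a 1 = 1)
    (hgap : 2 ≤ m → (1 : ℤ) < (a 2 : ℤ) - 1)
    (hmono : ∀ j, 2 ≤ j → j < m → a j < a (j + 1)) :
    Nat.card (LambdaTuples ((Finset.Icc 1 m).image a) n) =
      Nat.card (PiTuples ((Finset.Icc 2 m).image fun i => a i - 2) n) ∧
    ∃ e : PiTuples ((Finset.Icc 2 m).image fun i => a i - 2) n ≃
          LambdaTuples ((Finset.Icc 1 m).image a) n,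
      ∀ π, ∀ i : Fin n,
        (e π).val i = SStep.U :: π.val i ++ [SStep.D] := by
  classical
  set A : Finset ℕ := (Finset.Icc 1 m).image a with hA
  set A' : Finset ℕ := (Finset.Icc 2 m).image (fun i => a i - 2) with hA'
  have ha3 : ∀ j, 2 ≤ j → j ≤ m → 3 ≤ a j := by
    intro j h2
    induction j, h2 using Nat.le_induction with
    | base => intro h2m; have := hgap h2m; omega
    | succ j hj ih =>
      intro hjm
      have h1 := hmono j hj (by omega)
      have h2' := ih (by omega)
      omega
  have h1A : (1 : ℕ) ∈ A := by
    rw [hA]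
    exact Finset.mem_image.2 ⟨1, Finset.mem_Icc.2 ⟨le_refl 1, hm⟩, ha1⟩
  have hAcase : ∀ b ∈ A, b = 1 ∨ (3 ≤ b ∧ b - 2 ∈ A') := by
    intro b hb
    rw [hA] at hb
    obtain ⟨j, hj, hjb⟩ := Finset.mem_image.1 hb
    rw [Finset.mem_Icc] at hj
    rcases eq_or_lt_of_le hj.1 with h1 | h1
    · left; rw [← hjb, ← h1, ha1]
    · right
      have h3 := ha3 j h1 hj.2
      refine ⟨by omega, ?_⟩
      rw [hA']
      exact Finset.mem_image.2 ⟨j, Finset.mem_Icc.2 ⟨h1, hj.2⟩, by omega⟩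
  have hA'up : ∀ b ∈ A', b + 2 ∈ A := by
    intro b hb
    rw [hA'] at hb
    obtain ⟨j, hj, hjb⟩ := Finset.mem_image.1 hb
    rw [Finset.mem_Icc] at hj
    have h3 := ha3 j hj.1 hj.2
    rw [hA]
    exact Finset.mem_image.2 ⟨j, Finset.mem_Icc.2 ⟨by omega, hj.2⟩, by omega⟩
  have h0A : (0 : ℕ) ∉ A := by
    intro h
    rcases hAcase 0 h with h | h
    · omega
    · omega
  have hQinf := odd_not_mem_infinite A'
  have hPinf := odd_not_mem_infinite A
  have hPQ : ∀ k, ((fun k => Odd k ∧ k ∉ A) (k + 2)) ↔ ((fun k => Odd k ∧ k ∉ A') k) := by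
    intro k
    simp only
    constructor
    · rintro ⟨hodd, hmem⟩
      obtain ⟨t, ht⟩ := hodd
      refine ⟨⟨t - 1, by omega⟩, fun hc => hmem (hA'up k hc)⟩
    · rintro ⟨hodd, hmem⟩
      obtain ⟨t, ht⟩ := hodd
      refine ⟨⟨t + 1, by omega⟩, fun hc => ?_⟩
      rcases hAcase _ hc with h | h
      · omega
      · exact hmem (by simpa using h.2)
  set nthA : ℕ → ℕ := Nat.nth (fun k => Odd k ∧ k ∉ A) with hnthA
  set nthB : ℕ → ℕ := Nat.nth (fun k => Odd k ∧ k ∉ A') with hnthB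
  have hshift : ∀ i, nthA i = nthB i + 2 := by
    intro i
    rw [hnthA, hnthB]
    exact nth_shift hQinf (by rintro ⟨h, -⟩; rw [Nat.odd_iff] at h; omega)
      (fun h => h.2 h1A) hPQ i
  have hBfact : ∀ i, Odd (nthB i) ∧ nthB i ∉ A' := fun i => Nat.nth_mem_of_infinite hQinf i
  have hAfact : ∀ i, Odd (nthA i) ∧ nthA i ∉ A := by
    intro i
    rw [hshift i]
    exact (hPQ (nthB i)).2 (hBfact i)
  have hB1 : ∀ i, 1 ≤ nthB i := by
    intro i
    obtain ⟨t, ht⟩ := (hBfact i).1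
    omega
  have hA3 : ∀ i, 3 ≤ nthA i := by
    intro i
    have := hB1 i
    rw [hshift i]
    omega
  -- ===================== Λ-side decomposition =====================
  have lamDecomp : ∀ (lam : LambdaTuples A n) (i : Fin n),
      ∃ mid, lam.1 i = SStep.U :: mid ++ [SStep.D] ∧
        (∀ r ∈ pathPoints (startPt A i + (1, 1)) mid, 1 ≤ r.2) ∧
        pathEnd (startPt A i + (1, 1)) mid = (2 * (i : ℤ) + 1 - 1, 1) := by
    intro lam i
    obtain ⟨hSch, hBar, hFlat⟩ := lam.2.1 i
    obtain ⟨hp2, -, hend, hnn⟩ := hSch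
    have haxis : ∀ r ∈ pathPoints (startPt A i) (lam.1 i), r.2 = 0 →
        r ≠ startPt A i → r.1 < 2 * (i : ℤ) + 1 → ∃ b ∈ A, r.1 = -(b : ℤ) := by
      intro r hr hr0 hrne hrlt
      by_contra hcon
      push_neg at hcon
      obtain ⟨c, hc⟩ := mem_pathPoints_sum _ _ hr
      have hc' : r.1 + r.2 = -(nthA (i : ℕ) : ℤ) + 0 + 2 * c := hc
      obtain ⟨ta, hta⟩ := (hAfact (i : ℕ)).1
      rcases lt_trichotomy r.1 0 with hneg | hzero | hpos
      · have hk : (0 : ℤ) ≤ -r.1 := by omega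
        set k : ℕ := (-r.1).toNat with hkdef
        have hkz : (k : ℤ) = -r.1 := Int.toNat_of_nonneg hk
        have hkA : k ∉ A := fun hmem => hcon k hmem (by omega)
        have hkodd : Odd k := by rw [Nat.odd_iff]; omega
        have hnthk : nthA (Nat.count (fun k => Odd k ∧ k ∉ A) k) = k :=
          Nat.nth_count ⟨hkodd, hkA⟩
        have hplt : (startPt A (i : ℕ)).1 < r.1 := by
          rcases mem_pathPoints_x _ _ hr with h | h
          · exact absurd h hrne
          · exact h
        have hplt' : -(nthA (i : ℕ) : ℤ) < r.1 := hplt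
        set t : ℕ := Nat.count (fun k => Odd k ∧ k ∉ A) k with htdef
        have hklt : k < nthA (i : ℕ) := by omega
        have htlt : t < (i : ℕ) :=
          (Nat.nth_lt_nth hPinf).1 (show nthA t < nthA (i : ℕ) by omega)
        have htn : t < n := lt_trans htlt i.2
        have hrstart : r = startPt A ((⟨t, htn⟩ : Fin n) : ℕ) := by
          refine Prod.ext ?_ ?_
          · show r.1 = -(nthA t : ℤ)
            omega
          · exact hr0
        exact (lam.2.2 i ⟨t, htn⟩ (Fin.ne_of_val_ne (show (i : ℕ) ≠ t by omega)) r hr)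
          (by rw [hrstart]; exact mem_pathPoints_self _ _)
      · omega
      · set u : ℕ := (r.1 - 1).toNat / 2 with hudef
        have hw : ((r.1 - 1).toNat : ℤ) = r.1 - 1 := Int.toNat_of_nonneg (by omega)
        have hu : r.1 = 2 * (u : ℤ) + 1 := by omega
        have hult : u < (i : ℕ) := by omega
        have hun : u < n := lt_trans hult i.2
        obtain ⟨-, -, hendu, -⟩ := (lam.2.1 ⟨u, hun⟩).1
        have hru : r = endPt ((⟨u, hun⟩ : Fin n) : ℕ) := by
          refine Prod.ext ?_ ?_
          · exact hu
          · exact hr0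
        exact (lam.2.2 i ⟨u, hun⟩ (Fin.ne_of_val_ne (show (i : ℕ) ≠ u by omega)) r hr)
          (by rw [hru, ← hendu]; exact pathEnd_mem_pathPoints _ _)
    have hp1 : (startPt A (i : ℕ)).1 ≤ -1 := by
      show -(nthA (i : ℕ) : ℤ) ≤ -1
      have := hA3 (i : ℕ)
      omega
    exact lam_decomp h0A (by omega) hp1 rfl hend hnn
      (fun pr hpr => (hBar pr hpr).1) hFlat haxis
  -- ===================== forward map properties =====================
  have fwdProp : ∀ (π : PiTuples A' n),
      (∀ i : Fin n, IsSchroder (startPt A i) (endPt i) (SStep.U :: π.1 i ++ [SStep.D]) ∧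
        BarCompatible A (startPt A i) (SStep.U :: π.1 i ++ [SStep.D]) ∧
        NoBadFlat A (startPt A i) (SStep.U :: π.1 i ++ [SStep.D])) ∧
      (∀ i j : Fin n, i ≠ j →
        ∀ x ∈ pathPoints (startPt A i) (SStep.U :: π.1 i ++ [SStep.D]),
          x ∉ pathPoints (startPt A j) (SStep.U :: π.1 j ++ [SStep.D])) := by
    intro π
    have hSch : ∀ i : Fin n, IsSchroder (startPt A' i) (endPt i) (π.1 i) :=
      fun i => (π.2.1 i).1
    have hBarPi : ∀ i : Fin n, BarCompatible A' (startPt A' i) (π.1 i) :=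
      fun i => (π.2.1 i).2
    have hnnPi : ∀ (i : Fin n), ∀ r ∈ pathPoints (startPt A' i) (π.1 i), 0 ≤ r.2 :=
      fun i => (hSch i).2.2.2
    have hendPi : ∀ i : Fin n, pathEnd (startPt A' i) (π.1 i) = endPt (i : ℕ) :=
      fun i => (hSch i).2.2.1
    have hoddPi : ∀ (i : Fin n), ∀ r ∈ pathPoints (startPt A' i) (π.1 i),
        Odd (r.2 - r.1) := by
      intro i r hr
      obtain ⟨c, hc⟩ := mem_pathPoints_diff _ _ hr
      have hc' : r.2 - r.1 = 0 - (-(nthB (i : ℕ) : ℤ)) - 2 * c := hc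
      obtain ⟨t, ht⟩ := (hBfact (i : ℕ)).1
      exact ⟨(t : ℤ) - c, by omega⟩
    -- key covering argument: the only point of π i on the line y = x - 1 is (i+1, i)
    have keyQ : ∀ (k : ℕ) (hk : k < n) (q : ℤ × ℤ),
        q ∈ pathPoints (startPt A' ((⟨k, hk⟩ : Fin n) : ℕ)) (π.1 ⟨k, hk⟩) →
        q.2 - q.1 = -1 → q = ((k : ℤ) + 1, (k : ℤ)) := by
      intro k
      induction k using Nat.strong_induction_on with
      | _ k ih =>
        intro hk q hq hdiff
        have hq2 : 0 ≤ q.2 := hnnPi ⟨k, hk⟩ q hq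
        have hsum : q.1 + q.2 ≤ 2 * (k : ℤ) + 1 := by
          have h := mem_sum_le_pathEnd hq
          rw [hendPi ⟨k, hk⟩] at h
          have h' : q.1 + q.2 ≤ (2 * (k : ℤ) + 1) + 0 := h
          omega
        by_cases hcase : q.1 = (k : ℤ) + 1
        · exact Prod.ext hcase (by omega)
        · exfalso
          have hq1 : 1 ≤ q.1 := by omega
          set j : ℕ := (q.1 - 1).toNat with hjdef
          have hjz : (j : ℤ) = q.1 - 1 := Int.toNat_of_nonneg (by omega)
          have hjk : j < k := by omega
          have hjn : j < n := by omega
          obtain ⟨-, -, hend', hnn'⟩ := hSch ⟨j, hjn⟩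
          have hd1 : (startPt A' ((⟨j, hjn⟩ : Fin n) : ℕ)).2 -
              (startPt A' ((⟨j, hjn⟩ : Fin n) : ℕ)).1 = (nthB j : ℤ) := by
            show (0 : ℤ) - (-(nthB j : ℤ)) = _
            ring
          obtain ⟨r, hr, hrdiff⟩ := crossing (π.1 ⟨j, hjn⟩)
            (startPt A' ((⟨j, hjn⟩ : Fin n) : ℕ))
            (by rw [hd1]; exact Int.odd_coe_nat _ |>.2 (hBfact j).1)
            (by rw [hd1]; have := hB1 j; omega)
            (by
              rw [hend']
              show (0 : ℤ) - (2 * (j : ℤ) + 1) ≤ -1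
              have : (0 : ℤ) ≤ (j : ℤ) := Int.natCast_nonneg j
              omega)
          have hrq := ih j hjk hjn r hr hrdiff
          have hrq' : r = q := by
            rw [hrq]
            refine (Prod.ext ?_ ?_).symm
            · omega
            · omega
          exact (π.2.2 ⟨k, hk⟩ ⟨j, hjn⟩ (Fin.ne_of_val_ne (show k ≠ j by omega)) q hq)
            (hrq' ▸ hr)
    have keyU : ∀ (i : Fin n) (pr : (ℤ × ℤ) × SStep),
        pr ∈ stepsWithPos (startPt A' (i : ℕ)) (π.1 i) → pr.2 = SStep.U →
        pr.1.2 - pr.1.1 ≠ -1 := by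
      intro i pr hpr hU hdiff
      obtain ⟨h1, h2⟩ := steps_mem _ _ hpr
      have e1 := keyQ (i : ℕ) i.2 pr.1 h1 hdiff
      rw [hU] at h2
      have hd2 : (pr.1 + SStep.U.vec).2 - (pr.1 + SStep.U.vec).1 = -1 := by
        show pr.1.2 + 1 - (pr.1.1 + 1) = -1
        omega
      have e2 := keyQ (i : ℕ) i.2 _ h2 hd2
      have f1 : pr.1.1 = (i : ℤ) + 1 := congrArg Prod.fst e1
      have f2 : pr.1.1 + 1 = (i : ℤ) + 1 := congrArg Prod.fst e2
      omega
    -- coordinate bookkeeping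
    have hshiftPt : ∀ i : Fin n,
        startPt A (i : ℕ) + ((1 : ℤ), (1 : ℤ)) = startPt A' (i : ℕ) + (-1, 1) := by
      intro i
      have h := hshift (i : ℕ)
      refine Prod.ext ?_ ?_
      · show -(nthA (i : ℕ) : ℤ) + 1 = -(nthB (i : ℕ) : ℤ) + -1
        omega
      · rfl
    have hUvec : ∀ i : Fin n,
        startPt A (i : ℕ) + SStep.U.vec = startPt A' (i : ℕ) + (-1, 1) := hshiftPt
    have hmidend : ∀ i : Fin n,
        pathEnd (startPt A' (i : ℕ) + (-1, 1)) (π.1 i) = (2 * (i : ℤ), 1) := by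
      intro i
      rw [pathEnd_translate, hendPi i]
      refine Prod.ext ?_ ?_
      · show 2 * (i : ℤ) + 1 + -1 = 2 * (i : ℤ)
        ring
      · rfl
    have hD2 : ∀ i : Fin n,
        ((2 * (i : ℤ), (1 : ℤ)) : ℤ × ℤ) + SStep.D.vec = (2 * (i : ℤ) + 1, 0) := by
      intro i
      refine Prod.ext ?_ ?_
      · show 2 * (i : ℤ) + 1 = 2 * (i : ℤ) + 1; rfl
      · show (1 : ℤ) + -1 = 0; ring
    have hpts : ∀ i : Fin n,
        pathPoints (startPt A (i : ℕ)) (SStep.U :: π.1 i ++ [SStep.D]) =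
        startPt A (i : ℕ) ::
          ((pathPoints (startPt A' (i : ℕ)) (π.1 i)).map (· + (-1, 1)) ++
            [(2 * (i : ℤ) + 1, 0)]) := by
      intro i
      show pathPoints (startPt A (i : ℕ)) (SStep.U :: (π.1 i ++ [SStep.D])) = _
      rw [pathPoints_cons, hUvec i, pathPoints_concat, pathPoints_translate,
        hmidend i, hD2 i]
    have hsteps : ∀ i : Fin n,
        stepsWithPos (startPt A (i : ℕ)) (SStep.U :: π.1 i ++ [SStep.D]) =
        (startPt A (i : ℕ), SStep.U) ::
          ((stepsWithPos (startPt A' (i : ℕ)) (π.1 i)).map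
              (fun pr => (pr.1 + (-1, 1), pr.2)) ++
            [(((2 * (i : ℤ), 1) : ℤ × ℤ), SStep.D)]) := by
      intro i
      show stepsWithPos (startPt A (i : ℕ)) (SStep.U :: (π.1 i ++ [SStep.D])) = _
      rw [stepsWithPos_cons, hUvec i, stepsWithPos_concat, stepsWithPos_translate,
        hmidend i]
    -- IsSchroder
    have hschF : ∀ i : Fin n,
        IsSchroder (startPt A (i : ℕ)) (endPt (i : ℕ)) (SStep.U :: π.1 i ++ [SStep.D]) := by
      intro i
      refine ⟨rfl, rfl, ?_, ?_⟩
      · show pathEnd (startPt A (i : ℕ)) (SStep.U :: (π.1 i ++ [SStep.D])) = _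
        rw [pathEnd_cons, hUvec i, pathEnd_append, hmidend i]
        exact hD2 i
      · intro r hr
        rw [hpts i] at hr
        rcases List.mem_cons.1 hr with hr | hr
        · rw [hr]; exact le_refl 0
        · rcases List.mem_append.1 hr with hr | hr
          · obtain ⟨r0, hr0, hr0e⟩ := List.mem_map.1 hr
            have h := hnnPi i _ hr0
            have h2 : r.2 = r0.2 + 1 := by rw [← hr0e]; rfl
            omega
          · rw [List.mem_singleton] at hr
            rw [hr]
    -- BarCompatible
    have hbarF : ∀ i : Fin n,
        BarCompatible A (startPt A (i : ℕ)) (SStep.U :: π.1 i ++ [SStep.D]) := by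
      intro i pr hpr
      rw [hsteps i] at hpr
      rcases List.mem_cons.1 hpr with hpr | hpr
      · subst hpr
        constructor
        · intro _ b hbA
          show (0 : ℤ) - (-(nthA (i : ℕ) : ℤ)) ≠ (b : ℤ)
          intro hC
          have hb : b = nthA (i : ℕ) := by omega
          exact (hAfact (i : ℕ)).2 (hb ▸ hbA)
        · intro hD
          exact absurd hD (by simp)
      · rcases List.mem_append.1 hpr with hpr | hpr
        · obtain ⟨pr0, hpr0, hpr0e⟩ := List.mem_map.1 hpr
          subst hpr0e
          obtain ⟨hq, -⟩ := steps_mem _ _ hpr0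
          have hqodd := hoddPi i _ hq
          constructor
          · intro hU b hbA
            show pr0.1.2 + 1 - (pr0.1.1 + -1) ≠ (b : ℤ)
            intro hC
            rcases hAcase b hbA with hb1 | ⟨hb3, hbA'⟩
            · subst hb1
              exact keyU i pr0 hpr0 hU (by omega)
            · have hbar2 := (hBarPi i pr0 hpr0).1 hU (b - 2) hbA'
              apply hbar2
              have hcast : ((b - 2 : ℕ) : ℤ) = (b : ℤ) - 2 := by omega
              omega
          · intro hD b hbA
            show pr0.1.2 + 1 - (pr0.1.1 + -1) - 1 ≠ (b : ℤ)
            intro hC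
            rcases hAcase b hbA with hb1 | ⟨hb3, hbA'⟩
            · subst hb1
              obtain ⟨w, hw⟩ := hqodd
              omega
            · have hbar2 := (hBarPi i pr0 hpr0).2 hD (b - 2) hbA'
              apply hbar2
              have hcast : ((b - 2 : ℕ) : ℤ) = (b : ℤ) - 2 := by omega
              omega
        · rw [List.mem_singleton] at hpr
          subst hpr
          constructor
          · intro hU
            exact absurd hU (by simp)
          · intro _ b hbA
            show (1 : ℤ) - (2 * (i : ℤ)) - 1 ≠ (b : ℤ)
            intro hC
            have hb0 : b ≠ 0 := fun h => h0A (h ▸ hbA)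
            have hi0 : (0 : ℤ) ≤ (i : ℤ) := Int.natCast_nonneg _
            omega
    -- NoBadFlat
    have hflatF : ∀ i : Fin n,
        NoBadFlat A (startPt A (i : ℕ)) (SStep.U :: π.1 i ++ [SStep.D]) := by
      intro i pr hpr hF hy
      exfalso
      rw [hsteps i] at hpr
      rcases List.mem_cons.1 hpr with hpr | hpr
      · rw [hpr] at hF
        exact absurd hF (by simp)
      · rcases List.mem_append.1 hpr with hpr | hpr
        · obtain ⟨pr0, hpr0, hpr0e⟩ := List.mem_map.1 hpr
          obtain ⟨hq, -⟩ := steps_mem _ _ hpr0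
          have h := hnnPi i _ hq
          have hy' : pr0.1.2 + 1 = 0 := by rw [← hpr0e] at hy; exact hy
          omega
        · rw [List.mem_singleton] at hpr
          rw [hpr] at hF
          exact absurd hF (by simp)
    -- non-intersection
    have hnonintF : ∀ i j : Fin n, i ≠ j →
        ∀ x ∈ pathPoints (startPt A (i : ℕ)) (SStep.U :: π.1 i ++ [SStep.D]),
          x ∉ pathPoints (startPt A (j : ℕ)) (SStep.U :: π.1 j ++ [SStep.D]) := by
      intro i j hij x hxi hxj
      rw [hpts i] at hxi
      rw [hpts j] at hxj
      simp only [List.mem_cons, List.mem_append, List.mem_map, List.mem_singleton,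
        List.not_mem_nil, or_false] at hxi hxj
      have hstart2 : ∀ k : Fin n, (startPt A (k : ℕ)).2 = 0 := fun k => rfl
      have hstart1 : ∀ k : Fin n, (startPt A (k : ℕ)).1 = -(nthA (k : ℕ) : ℤ) :=
        fun k => rfl
      rcases hxi with h1 | h1 | h1
      · rcases hxj with h2 | h2 | h2
        · apply hij
          have he : -(nthA (i : ℕ) : ℤ) = -(nthA (j : ℕ) : ℤ) := by
            rw [← hstart1 i, ← hstart1 j, ← h1, ← h2]
          have he' : nthA (i : ℕ) = nthA (j : ℕ) := by omega
          exact Fin.ext (Nat.nth_injective hPinf he')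
        · obtain ⟨r0, hr0, hr0e⟩ := h2
          have hnn0 := hnnPi j _ hr0
          have hx2 : x.2 = r0.2 + 1 := by rw [← hr0e]; rfl
          rw [h1] at hx2
          have := hstart2 i
          omega
        · have hx1 : x.1 = -(nthA (i : ℕ) : ℤ) := by rw [h1]; rfl
          have hx1' : x.1 = 2 * (j : ℤ) + 1 := by rw [h2]
          have := hA3 (i : ℕ)
          have hj0 : (0 : ℤ) ≤ (j : ℤ) := Int.natCast_nonneg _
          omega
      · obtain ⟨r1, hr1, hr1e⟩ := h1
        rcases hxj with h2 | h2 | h2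
        · have hnn0 := hnnPi i _ hr1
          have hx2 : x.2 = r1.2 + 1 := by rw [← hr1e]; rfl
          rw [h2] at hx2
          have := hstart2 j
          omega
        · obtain ⟨r2, hr2, hr2e⟩ := h2
          have : r1 = r2 := by
            have := hr1e.trans hr2e.symm
            exact add_right_cancel this
          subst this
          exact (π.2.2 i j hij r1 hr1) hr2
        · have hnn0 := hnnPi i _ hr1
          have hx2 : x.2 = r1.2 + 1 := by rw [← hr1e]; rfl
          rw [h2] at hx2
          simp only at hx2
          omega
      · rcases hxj with h2 | h2 | h2
        · have hx1 : x.1 = -(nthA (j : ℕ) : ℤ) := by rw [h2]; rfl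
          have hx1' : x.1 = 2 * (i : ℤ) + 1 := by rw [h1]
          have := hA3 (j : ℕ)
          have hi0 : (0 : ℤ) ≤ (i : ℤ) := Int.natCast_nonneg _
          omega
        · obtain ⟨r2, hr2, hr2e⟩ := h2
          have hnn0 := hnnPi j _ hr2
          have hx2 : x.2 = r2.2 + 1 := by rw [← hr2e]; rfl
          rw [h1] at hx2
          simp only at hx2
          omega
        · apply hij
          have : (2 * (i : ℤ) + 1) = (2 * (j : ℤ) + 1) := by
            have e1 : x.1 = 2 * (i : ℤ) + 1 := by rw [h1]
            have e2 : x.1 = 2 * (j : ℤ) + 1 := by rw [h2]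
            omega
          have : (i : ℕ) = (j : ℕ) := by omega
          exact Fin.ext this
    exact ⟨fun i => ⟨hschF i, hbarF i, hflatF i⟩, hnonintF⟩
  -- ===================== backward map properties =====================
  have bwdProp : ∀ (lam : LambdaTuples A n),
      (∀ i : Fin n, IsSchroder (startPt A' i) (endPt i) ((lam.1 i).tail.dropLast) ∧
        BarCompatible A' (startPt A' i) ((lam.1 i).tail.dropLast)) ∧
      (∀ i j : Fin n, i ≠ j →
        ∀ x ∈ pathPoints (startPt A' i) ((lam.1 i).tail.dropLast),
          x ∉ pathPoints (startPt A' j) ((lam.1 j).tail.dropLast)) := by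
    intro lam
    have hmid : ∀ i : Fin n,
        lam.1 i = SStep.U :: ((lam.1 i).tail.dropLast) ++ [SStep.D] ∧
        (∀ r ∈ pathPoints (startPt A (i : ℕ) + (1, 1)) ((lam.1 i).tail.dropLast),
          1 ≤ r.2) ∧
        pathEnd (startPt A (i : ℕ) + (1, 1)) ((lam.1 i).tail.dropLast) =
          (2 * (i : ℤ) + 1 - 1, 1) := by
      intro i
      obtain ⟨mid, h1, h2, h3⟩ := lamDecomp lam i
      have he : (lam.1 i).tail.dropLast = mid := by rw [h1]; simp
      rw [he]
      exact ⟨h1, h2, h3⟩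
    have hback : ∀ i : Fin n,
        startPt A (i : ℕ) + ((1 : ℤ), (1 : ℤ)) + ((1 : ℤ), (-1 : ℤ)) =
          startPt A' (i : ℕ) := by
      intro i
      have h := hshift (i : ℕ)
      refine Prod.ext ?_ ?_
      · show -(nthA (i : ℕ) : ℤ) + 1 + 1 = -(nthB (i : ℕ) : ℤ)
        omega
      · show (0 : ℤ) + 1 + -1 = 0
        ring
    have hpts' : ∀ i : Fin n,
        pathPoints (startPt A' (i : ℕ)) ((lam.1 i).tail.dropLast) =
        (pathPoints (startPt A (i : ℕ) + (1, 1)) ((lam.1 i).tail.dropLast)).map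
          (· + (1, -1)) := by
      intro i
      rw [← hback i, pathPoints_translate]
    have hptmem : ∀ i : Fin n, ∀ r,
        r ∈ pathPoints (startPt A (i : ℕ) + (1, 1)) ((lam.1 i).tail.dropLast) →
        r ∈ pathPoints (startPt A (i : ℕ)) (lam.1 i) := by
      intro i r hr
      rw [(hmid i).1]
      show r ∈ pathPoints (startPt A (i : ℕ))
        (SStep.U :: ((lam.1 i).tail.dropLast ++ [SStep.D]))
      rw [pathPoints_cons]
      refine List.mem_cons_of_mem _ ?_
      have hUv : startPt A (i : ℕ) + SStep.U.vec = startPt A (i : ℕ) + (1, 1) := rfl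
      rw [hUv]
      exact mem_pathPoints_append_left _ _ hr
    have hstepmem : ∀ i : Fin n, ∀ pr,
        pr ∈ stepsWithPos (startPt A (i : ℕ) + (1, 1)) ((lam.1 i).tail.dropLast) →
        pr ∈ stepsWithPos (startPt A (i : ℕ)) (lam.1 i) := by
      intro i pr hpr
      rw [(hmid i).1]
      show pr ∈ stepsWithPos (startPt A (i : ℕ))
        (SStep.U :: ((lam.1 i).tail.dropLast ++ [SStep.D]))
      rw [stepsWithPos_cons]
      refine List.mem_cons_of_mem _ ?_
      have hUv : startPt A (i : ℕ) + SStep.U.vec = startPt A (i : ℕ) + (1, 1) := rfl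
      rw [hUv]
      exact mem_stepsWithPos_append_left _ _ hpr
    refine ⟨?_, ?_⟩
    · intro i
      refine ⟨⟨rfl, rfl, ?_, ?_⟩, ?_⟩
      · rw [← hback i, pathEnd_translate, (hmid i).2.2]
        refine Prod.ext ?_ ?_
        · show 2 * (i : ℤ) + 1 - 1 + 1 = 2 * (i : ℤ) + 1
          ring
        · show (1 : ℤ) + -1 = 0
          ring
      · intro r hr
        rw [hpts' i] at hr
        obtain ⟨r0, hr0, hr0e⟩ := List.mem_map.1 hr
        have h := (hmid i).2.1 r0 hr0
        have h2 : r.2 = r0.2 + -1 := by rw [← hr0e]; rfl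
        omega
      · intro pr hpr
        have hstv : stepsWithPos (startPt A' (i : ℕ)) ((lam.1 i).tail.dropLast) =
            (stepsWithPos (startPt A (i : ℕ) + (1, 1)) ((lam.1 i).tail.dropLast)).map
              (fun pr => (pr.1 + (1, -1), pr.2)) := by
          rw [← hback i, stepsWithPos_translate]
        rw [hstv] at hpr
        obtain ⟨pr0, hpr0, hpr0e⟩ := List.mem_map.1 hpr
        subst hpr0e
        have hmem := hstepmem i pr0 hpr0
        have hbarL := (lam.2.1 i).2.1 pr0 hmem
        constructor
        · intro hU b hbA'
          have hb2 := hA'up b hbA'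
          have hbar2 := hbarL.1 hU (b + 2) hb2
          show pr0.1.2 + -1 - (pr0.1.1 + 1) ≠ (b : ℤ)
          intro hC
          apply hbar2
          push_cast
          omega
        · intro hD b hbA'
          have hb2 := hA'up b hbA'
          have hbar2 := hbarL.2 hD (b + 2) hb2
          show pr0.1.2 + -1 - (pr0.1.1 + 1) - 1 ≠ (b : ℤ)
          intro hC
          apply hbar2
          push_cast
          omega
    · intro i j hij x hxi hxj
      rw [hpts' i] at hxi
      rw [hpts' j] at hxj
      obtain ⟨r1, hr1, hr1e⟩ := List.mem_map.1 hxi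
      obtain ⟨r2, hr2, hr2e⟩ := List.mem_map.1 hxj
      have : r1 = r2 := by
        have := hr1e.trans hr2e.symm
        exact add_right_cancel this
      subst this
      exact (lam.2.2 i j hij r1 (hptmem i _ hr1)) (hptmem j _ hr2)
  -- ===================== assemble the equivalence =====================
  let e : PiTuples A' n ≃ LambdaTuples A n :=
    { toFun := fun π => ⟨fun i => SStep.U :: π.1 i ++ [SStep.D],
        ⟨(fwdProp π).1, (fwdProp π).2⟩⟩
      invFun := fun lam => ⟨fun i => (lam.1 i).tail.dropLast,
        ⟨(bwdProp lam).1, (bwdProp lam).2⟩⟩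
      left_inv := by
        intro π
        apply Subtype.ext
        funext i
        simp
      right_inv := by
        intro lam
        apply Subtype.ext
        funext i
        show SStep.U :: ((lam.1 i).tail.dropLast) ++ [SStep.D] = lam.1 i
        obtain ⟨mid, h1, -, -⟩ := lamDecomp lam i
        have he : (lam.1 i).tail.dropLast = mid := by rw [h1]; simp
        rw [he, ← h1] }
  exact ⟨Nat.card_congr e.symm, e, fun π i => rfl⟩
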